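/- arXiv:1411.0874 — 4 statements merged into one kernel-verified Lean document; each statement's English description precedes it below -/
import Mathlib

section
/- The functions I₁ = N' − K' + K² + N² − NK and I₂ = 3(N'K − K'N) − 2(K³ + N³) + 3(K²N + N²K) are first integrals of the ODE system −2K'' + N'' + 6KK' − 3KN' = 0, K'' − 2N'' + 3NK' − 6NN' = 0; that is, for any C²-solutions K(t), N(t) of the system, dI₁/dt = 0 and dI₂/dt = 0. -/
/-!
Writing `E₁, E₂` for the left-hand sides of the two equations, the product rule gives the
differential identities `3 I₁' = E₁ − E₂` and `I₂' = N (2E₁ + E₂) − K (E₁ + 2E₂)`, valid for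
any pair of twice differentiable functions; on solutions both right-hand sides vanish.
-/

noncomputable section ReducedSystem

variable {𝕜 𝔸 : Type*} [NontriviallyNormedField 𝕜] [NormedCommRing 𝔸] [NormedAlgebra 𝕜 𝔸]

def reducedEq₁ (K N : 𝕜 → 𝔸) (t : 𝕜) : 𝔸 :=
  -2 * deriv (deriv K) t + deriv (deriv N) t + 6 * K t * deriv K t - 3 * K t * deriv N t

def reducedEq₂ (K N : 𝕜 → 𝔸) (t : 𝕜) : 𝔸 :=
  deriv (deriv K) t - 2 * deriv (deriv N) t + 3 * N t * deriv K t - 6 * N t * deriv N t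

def firstIntegral₁ (K N : 𝕜 → 𝔸) (s : 𝕜) : 𝔸 :=
  deriv N s - deriv K s + K s ^ 2 + N s ^ 2 - N s * K s

def firstIntegral₂ (K N : 𝕜 → 𝔸) (s : 𝕜) : 𝔸 :=
  3 * (deriv N s * K s - deriv K s * N s) - 2 * (K s ^ 3 + N s ^ 3)
    + 3 * (K s ^ 2 * N s + N s ^ 2 * K s)

variable {K N : 𝕜 → 𝔸} {t : 𝕜}
  (hK : DifferentiableAt 𝕜 K t) (hN : DifferentiableAt 𝕜 N t)
  (hK' : DifferentiableAt 𝕜 (deriv K) t) (hN' : DifferentiableAt 𝕜 (deriv N) t)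
include hK hN hK' hN'

theorem three_mul_deriv_firstIntegral₁ :
    3 * deriv (firstIntegral₁ K N) t = reducedEq₁ K N t - reducedEq₂ K N t := by
  have h := (((hN'.hasDerivAt.sub hK'.hasDerivAt).add (hK.hasDerivAt.pow 2)).add
    (hN.hasDerivAt.pow 2)).sub (hN.hasDerivAt.mul hK.hasDerivAt)
  rw [show deriv (firstIntegral₁ K N) t = _ from h.deriv, reducedEq₁, reducedEq₂]
  ring

theorem deriv_firstIntegral₂ :
    deriv (firstIntegral₂ K N) t = N t * (2 * reducedEq₁ K N t + reducedEq₂ K N t)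
      - K t * (reducedEq₁ K N t + 2 * reducedEq₂ K N t) := by
  have dK := hK.hasDerivAt
  have dN := hN.hasDerivAt
  have h := ((((hN'.hasDerivAt.mul dK).sub (hK'.hasDerivAt.mul dN)).const_mul 3).sub
    (((dK.pow 3).add (dN.pow 3)).const_mul 2)).add
    ((((dK.pow 2).mul dN).add ((dN.pow 2).mul dK)).const_mul 3)
  rw [show deriv (firstIntegral₂ K N) t = _ from h.deriv, reducedEq₁, reducedEq₂]
  simp only [Pi.pow_apply]
  ring

end ReducedSystem

/-- `I₁ = N' − K' + K² + N² − NK` and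
`I₂ = 3(N'K − K'N) − 2(K³ + N³) + 3(K²N + N²K)` are first integrals of the
system `−2K'' + N'' + 6KK' − 3KN' = 0`, `K'' − 2N'' + 3NK' − 6NN' = 0`. -/
theorem first_integrals_of_reduced_system
    (K N : ℝ → ℂ) (hK : ContDiff ℝ 2 K) (hN : ContDiff ℝ 2 N)
    (heq1 : ∀ t, -2 * deriv (deriv K) t + deriv (deriv N) t
        + 6 * K t * deriv K t - 3 * K t * deriv N t = 0)
    (heq2 : ∀ t, deriv (deriv K) t - 2 * deriv (deriv N) t
        + 3 * N t * deriv K t - 6 * N t * deriv N t = 0) :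
    (∀ t, deriv (fun s => deriv N s - deriv K s + (K s)^2 + (N s)^2
        - N s * K s) t = 0) ∧
    (∀ t, deriv (fun s => 3 * (deriv N s * K s - deriv K s * N s)
        - 2 * ((K s)^3 + (N s)^3) + 3 * ((K s)^2 * N s + (N s)^2 * K s)) t = 0) := by
  have hK₁ := hK.differentiable two_ne_zero
  have hN₁ := hN.differentiable two_ne_zero
  have hK₂ := hK.differentiable_deriv_two
  have hN₂ := hN.differentiable_deriv_two
  refine ⟨fun t => ?_, fun t => ?_⟩
  · have h := three_mul_deriv_firstIntegral₁ (hK₁ t) (hN₁ t) (hK₂ t) (hN₂ t)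
    rw [reducedEq₁, reducedEq₂, heq1, heq2, sub_zero, mul_eq_zero] at h
    exact h.resolve_left three_ne_zero
  · have h := deriv_firstIntegral₂ (hK₁ t) (hN₁ t) (hK₂ t) (hN₂ t)
    rw [reducedEq₁, reducedEq₂, heq1, heq2] at h
    exact h.trans (by ring)
end

section
/- For the normal form (Ξ₁,3): fix p₁, p₃ with p₁ ≠ p₃. The condition that the lines y = p₁x + p₁²/2, y = p₂x + p₂²/2 + 1, and the point of their intersection determined by p₁, p₃ satisfy the concurrency determinant equation is equivalent to the quadratic web equation p₂² − 2p₃p₂ + (2 + 2p₁p₃ − p₁²) = 0 in p₂; this quadratic has two distinct roots unless p₃² − 2p₁p₃ + p₁² − 2 = 0, i.e. unless (p₃ − p₁)² = 2. -/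
/-- Normal form `(Ξ₁,3)`: the concurrency of `y = p₁x + p₁²/2`,
`y = p₂x + p₂²/2 + 1`, and the line `x + p₃ = 0` is equivalent to the quadratic
web equation `p₂² − 2p₃p₂ + (2 + 2p₁p₃ − p₁²) = 0` in `p₂`; this quadratic has
two distinct roots unless `(p₃ − p₁)² = 2`. -/
theorem web_equation_Xi1_3 (p₁ p₃ : ℂ) (h : p₁ ≠ p₃) :
    (∀ p₂ : ℂ,
      (∃ x y : ℂ, y = p₁ * x + p₁^2 / 2 ∧ y = p₂ * x + p₂^2 / 2 + 1 ∧ x + p₃ = 0) ↔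
      p₂^2 - 2 * p₃ * p₂ + (2 + 2 * p₁ * p₃ - p₁^2) = 0) ∧
    ((p₃ - p₁)^2 ≠ 2 →
      ∃ a b : ℂ, a ≠ b ∧
        ∀ w : ℂ, w^2 - 2 * p₃ * w + (2 + 2 * p₁ * p₃ - p₁^2) = 0 ↔ (w = a ∨ w = b)) := by
  constructor
  · intro p₂
    constructor
    · rintro ⟨x, y, h1, h2, h3⟩
      have hx : x = -p₃ := by linear_combination h3
      subst hx
      have := h1.symm.trans h2
      linear_combination -2 * this
    · intro hq
      refine ⟨-p₃, p₁ * (-p₃) + p₁^2 / 2, rfl, ?_, by ring⟩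
      linear_combination -hq / 2
  · intro hd
    obtain ⟨d, hd2⟩ : ∃ d : ℂ, d^2 = (p₃ - p₁)^2 - 2 := by
      exact IsAlgClosed.exists_pow_nat_eq ((p₃ - p₁)^2 - 2) two_pos
    have hdne : d ≠ 0 := by
      intro h0
      apply hd
      rw [h0] at hd2
      linear_combination -hd2
    refine ⟨p₃ + d, p₃ - d, by intro he; exact hdne (by linear_combination he / 2), ?_⟩
    intro w
    constructor
    · intro hw
      have : (w - (p₃ + d)) * (w - (p₃ - d)) = 0 := by
        linear_combination hw - hd2
      rcases mul_eq_zero.mp this with h' | h'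
      · left; linear_combination h'
      · right; linear_combination h'
    · rintro (rfl | rfl) <;> linear_combination hd2
end

section
/- Suppose λ(x,y) satisfies the two PDEs λ(λ−1)(λ_{xx} + λ_{xy}) = (2λ−1)λ_x(λ_x + λ_y) and (λ−1)(λ_{xy} + λ_{yy}) = λ_y(λ_x + λ_y), with λ ∉ {0, 1}. Then the compatibility condition (equality of mixed third derivatives) implies (λ_x + λ_y)·[λ_x²(1 − 2λ) − λ λ_x λ_y + λ_{xx} λ(λ − 1)] = 0. -/
noncomputable def pdx (f : ℂ × ℂ → ℂ) (p : ℂ × ℂ) : ℂ := fderiv ℂ f p (1, 0)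

noncomputable def pdy (f : ℂ × ℂ → ℂ) (p : ℂ × ℂ) : ℂ := fderiv ℂ f p (0, 1)

/-!
Differentiate the first equation in `y` and the second in `x`. By symmetry of mixed partials
both results contain the same third derivatives `λ_xxy + λ_xyy`, and eliminating them with the
help of the two equations leaves `(λ - 1)² (λ_x + λ_y)(λ_x λ_y - λ λ_xy) = 0`. Modulo the first
equation, `(λ - 1)(λ_x λ_y - λ λ_xy)` is exactly the bracket of the claim.
-/

open Set

section PartialDerivatives

variable {Ω : Set (ℂ × ℂ)} {f g : ℂ × ℂ → ℂ} {p : ℂ × ℂ}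

theorem AnalyticOnNhd.fderiv_apply (hf : AnalyticOnNhd ℂ f Ω) (v : ℂ × ℂ) :
    AnalyticOnNhd ℂ (fun q => fderiv ℂ f q v) Ω := fun q hq =>
  ((ContinuousLinearMap.apply ℂ ℂ v).analyticAt _).comp (hf q hq).fderiv

theorem AnalyticOnNhd.pdx (hf : AnalyticOnNhd ℂ f Ω) : AnalyticOnNhd ℂ (pdx f) Ω :=
  hf.fderiv_apply _

theorem AnalyticOnNhd.pdy (hf : AnalyticOnNhd ℂ f Ω) : AnalyticOnNhd ℂ (pdy f) Ω :=
  hf.fderiv_apply _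

theorem AnalyticOnNhd.hasFDerivAt (hf : AnalyticOnNhd ℂ f Ω) (hp : p ∈ Ω) :
    HasFDerivAt f (fderiv ℂ f p) p :=
  (hf p hp).hasStrictFDerivAt.hasFDerivAt

theorem fderiv_apply_one_zero : fderiv ℂ f p (1, 0) = pdx f p := rfl

theorem fderiv_apply_zero_one : fderiv ℂ f p (0, 1) = pdy f p := rfl

theorem fderiv_fderiv_apply (hf : DifferentiableAt ℂ (fderiv ℂ f) p) (v w : ℂ × ℂ) :
    fderiv ℂ (fun q => fderiv ℂ f q v) p w = fderiv ℂ (fderiv ℂ f) p w v := by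
  rw [fderiv_clm_apply hf (differentiableAt_const v)]
  simp

theorem AnalyticAt.pdx_pdy_comm (hf : AnalyticAt ℂ f p) : pdx (pdy f) p = pdy (pdx f) p := by
  have hd : DifferentiableAt ℂ (fderiv ℂ f) p := hf.fderiv.differentiableAt
  change fderiv ℂ (fun q => fderiv ℂ f q (0, 1)) p (1, 0)
    = fderiv ℂ (fun q => fderiv ℂ f q (1, 0)) p (0, 1)
  rw [fderiv_fderiv_apply hd, fderiv_fderiv_apply hd]
  exact hf.contDiffAt.isSymmSndFDerivAt_of_omega _ _

theorem pdy_congr (hΩ : IsOpen Ω) (h : EqOn f g Ω) (hp : p ∈ Ω) : pdy f p = pdy g p := by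
  rw [pdy, pdy, (h.eventuallyEq_of_mem (hΩ.mem_nhds hp)).fderiv_eq]

theorem HasFDerivAt.eq_of_eqOn {f' g' : ℂ × ℂ →L[ℂ] ℂ} (hΩ : IsOpen Ω) (h : EqOn f g Ω)
    (hp : p ∈ Ω) (hf : HasFDerivAt f f' p) (hg : HasFDerivAt g g' p) : f' = g' :=
  hf.unique (hg.congr_of_eventuallyEq (h.eventuallyEq_of_mem (hΩ.mem_nhds hp)))

end PartialDerivatives

theorem compatibility_of_flatness_jets {R : Type*} [CommRing R] [NoZeroDivisors R]
    {l lx ly lxx lxy lyy lxxy lxyy : R} (hl : l ≠ 1)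
    (h₁ : l * (l - 1) * (lxx + lxy) = (2 * l - 1) * lx * (lx + ly))
    (h₂ : (l - 1) * (lxy + lyy) = ly * (lx + ly))
    (h₁y : l * (l - 1) * (lxxy + lxyy) + (2 * l - 1) * ly * (lxx + lxy)
      = (2 * l - 1) * lx * (lxy + lyy) + (lx + ly) * ((2 * l - 1) * lxy + 2 * lx * ly))
    (h₂x : (l - 1) * (lxxy + lxyy) + lx * (lxy + lyy) = ly * (lxx + lxy) + (lx + ly) * lxy) :
    (lx + ly) * (lx ^ 2 * (1 - 2 * l) - l * lx * ly + lxx * l * (l - 1)) = 0 := by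
  have elim : (l - 1) * ((lx + ly) * (l - 1) * (lx * ly - l * lxy)) = 0 := by
    linear_combination (l * (l - 1)) * h₁y - (l ^ 2 * (l - 1)) * h₂x
      - ((3 * l - 1) * ly) * h₁ + ((3 * l - 1) * lx * l) * h₂
  linear_combination (mul_eq_zero.mp elim).resolve_left (sub_ne_zero.mpr hl) + (lx + ly) * h₁

section FlatnessPDEs

variable {Ω : Set (ℂ × ℂ)} {lam : ℂ × ℂ → ℂ} {p : ℂ × ℂ}

theorem pdy_flatness_pde1 (hΩ : IsOpen Ω) (hA : AnalyticOnNhd ℂ lam Ω)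
    (hpde1 : ∀ p ∈ Ω, lam p * (lam p - 1) * (pdx (pdx lam) p + pdy (pdx lam) p) =
      (2 * lam p - 1) * pdx lam p * (pdx lam p + pdy lam p)) (hp : p ∈ Ω) :
    lam p * (lam p - 1) * (pdy (pdx (pdx lam)) p + pdy (pdy (pdx lam)) p)
        + (2 * lam p - 1) * pdy lam p * (pdx (pdx lam) p + pdy (pdx lam) p)
      = (2 * lam p - 1) * pdx lam p * (pdy (pdx lam) p + pdy (pdy lam) p)
        + (pdx lam p + pdy lam p) * ((2 * lam p - 1) * pdy (pdx lam) p
          + 2 * pdx lam p * pdy lam p) := by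
  have d {f : ℂ × ℂ → ℂ} (hf : AnalyticOnNhd ℂ f Ω) := hf.hasFDerivAt hp
  have e := congrArg (· (0, 1)) <| HasFDerivAt.eq_of_eqOn hΩ hpde1 hp
    (((d hA).mul ((d hA).sub_const 1)).mul ((d hA.pdx.pdx).add (d hA.pdx.pdy)))
    ((((d hA).const_mul 2).sub_const 1).mul (d hA.pdx) |>.mul ((d hA.pdx).add (d hA.pdy)))
  simp only [add_apply, smul_apply, smul_eq_mul, Pi.mul_apply, fderiv_apply_zero_one] at e
  linear_combination e

theorem pdx_flatness_pde2 (hΩ : IsOpen Ω) (hA : AnalyticOnNhd ℂ lam Ω)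
    (hpde2 : ∀ p ∈ Ω, (lam p - 1) * (pdy (pdx lam) p + pdy (pdy lam) p) =
      pdy lam p * (pdx lam p + pdy lam p)) (hp : p ∈ Ω) :
    (lam p - 1) * (pdy (pdx (pdx lam)) p + pdy (pdy (pdx lam)) p)
        + pdx lam p * (pdy (pdx lam) p + pdy (pdy lam) p)
      = pdy lam p * (pdx (pdx lam) p + pdy (pdx lam) p)
        + (pdx lam p + pdy lam p) * pdy (pdx lam) p := by
  have d {f : ℂ × ℂ → ℂ} (hf : AnalyticOnNhd ℂ f Ω) := hf.hasFDerivAt hp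
  have e := congrArg (· (1, 0)) <| HasFDerivAt.eq_of_eqOn hΩ hpde2 hp
    (((d hA).sub_const 1).mul ((d hA.pdx.pdy).add (d hA.pdy.pdy)))
    ((d hA.pdy).mul ((d hA.pdx).add (d hA.pdy)))
  simp only [add_apply, smul_apply, smul_eq_mul, fderiv_apply_one_zero] at e
  have hxy := (hA p hp).pdx_pdy_comm
  have hxxy := (hA.pdx p hp).pdx_pdy_comm
  have hxyy : pdx (pdy (pdy lam)) p = pdy (pdy (pdx lam)) p :=
    (hA.pdy p hp).pdx_pdy_comm.trans (pdy_congr hΩ (fun q hq => (hA q hq).pdx_pdy_comm) hp)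
  rw [hxy, hxxy, hxyy] at e
  linear_combination e

end FlatnessPDEs

theorem compatibility_of_flatness_pdes_general
    (Ω : Set (ℂ × ℂ)) (hΩ : IsOpen Ω)
    (lam : ℂ × ℂ → ℂ) (hlam : AnalyticOn ℂ lam Ω)
    (h1 : ∀ p ∈ Ω, lam p ≠ 1)
    (hpde1 : ∀ p ∈ Ω, lam p * (lam p - 1) * (pdx (pdx lam) p + pdy (pdx lam) p) =
      (2 * lam p - 1) * pdx lam p * (pdx lam p + pdy lam p))
    (hpde2 : ∀ p ∈ Ω, (lam p - 1) * (pdy (pdx lam) p + pdy (pdy lam) p) =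
      pdy lam p * (pdx lam p + pdy lam p)) :
    ∀ p ∈ Ω, (pdx lam p + pdy lam p) *
      ((pdx lam p)^2 * (1 - 2 * lam p) - lam p * pdx lam p * pdy lam p
        + pdx (pdx lam) p * lam p * (lam p - 1)) = 0 := by
  intro p hp
  have hA : AnalyticOnNhd ℂ lam Ω := hΩ.analyticOn_iff_analyticOnNhd.mp hlam
  exact compatibility_of_flatness_jets (h1 p hp) (hpde1 p hp) (hpde2 p hp)
    (pdy_flatness_pde1 hΩ hA hpde1 hp) (pdx_flatness_pde2 hΩ hA hpde2 hp)

/-- If `λ ∉ {0,1}` satisfies `λ(λ−1)(λ_{xx} + λ_{xy}) = (2λ−1)λ_x(λ_x + λ_y)`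
and `(λ−1)(λ_{xy} + λ_{yy}) = λ_y(λ_x + λ_y)`, then the compatibility
condition of the two PDEs yields
`(λ_x + λ_y)·[λ_x²(1 − 2λ) − λλ_xλ_y + λ_{xx}λ(λ−1)] = 0`. -/
theorem compatibility_of_flatness_pdes
    (Ω : Set (ℂ × ℂ)) (hΩ : IsOpen Ω)
    (lam : ℂ × ℂ → ℂ) (hlam : AnalyticOn ℂ lam Ω)
    (h0 : ∀ p ∈ Ω, lam p ≠ 0) (h1 : ∀ p ∈ Ω, lam p ≠ 1)
    (hpde1 : ∀ p ∈ Ω, lam p * (lam p - 1) * (pdx (pdx lam) p + pdy (pdx lam) p) =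
      (2 * lam p - 1) * pdx lam p * (pdx lam p + pdy lam p))
    (hpde2 : ∀ p ∈ Ω, (lam p - 1) * (pdy (pdx lam) p + pdy (pdy lam) p) =
      pdy lam p * (pdx lam p + pdy lam p)) :
    ∀ p ∈ Ω, (pdx lam p + pdy lam p) *
      ((pdx lam p)^2 * (1 - 2 * lam p) - lam p * pdx lam p * pdy lam p
        + pdx (pdx lam) p * lam p * (lam p - 1)) = 0 :=
  compatibility_of_flatness_pdes_general Ω hΩ lam hlam h1 hpde1 hpde2
end

section
/- Every 1-dimensional subalgebra of sl(3, ℂ) is conjugate under GL(3, ℂ) to the span of one of the matrices: the nilpotent Jordan block Ξ₁ with a single 3×3 Jordan block of eigenvalue 0; Ξ_{2,1} = E_{23}; Ξ_{2,3} = diag-block [[1,1],[0,1]] ⊕ (−2); Ξ_{3,2} = diag(1, −1, 0); or Ξ_{3,3} = diag(a, b, −(a+b)) with a, b, a+b all nonzero (after scaling one eigenvalue to 1). -/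
/-!
Over an algebraically closed field the characteristic polynomial of `A` splits as
`(X - a)(X - b)(X - c)` with `a + b + c = tr A = 0`, and the normal form is read off from the
coincidences among the roots. Distinct roots give an eigenbasis, and the root that vanishes, if
any, is put last. A double root `a ≠ c = -2a` gives `diag(a, a, c)` when `(A - a)(A - c) = 0` and
a `2 × 2` Jordan block otherwise. A triple root is `0`, so `A` is nilpotent and its Jordan type is
decided by whether `A² = 0`. In every case the conjugating matrix is the matrix of columns of an
explicit basis, whose linear independence is checked by applying a map that kills all but the
last vector.
-/

open Matrix Polynomial Module

section

variable {K V W : Type*} [Field K] [AddCommGroup V] [Module K V] [AddCommGroup W] [Module K W]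

theorem LinearIndependent.finSnoc_of_map_eq_zero {n : ℕ} {v : Fin n → V} {x : V}
    (hv : LinearIndependent K v) (f : V →ₗ[K] W) (hfv : ∀ i, f (v i) = 0) (hfx : f x ≠ 0) :
    LinearIndependent K (Fin.snoc v x) :=
  hv.finSnoc fun hx => hfx <| (Submodule.span_le (p := LinearMap.ker f)).2
    (Set.range_subset_iff.2 hfv) hx

theorem linearIndependent_vec2_of_map_eq_zero {x y : V} (hx : x ≠ 0) (f : V →ₗ[K] W)
    (hfx : f x = 0) (hfy : f y ≠ 0) : LinearIndependent K ![x, y] := by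
  have hx' : LinearIndependent K ![x] := linearIndependent_unique_iff.2 hx
  simpa using hx'.finSnoc_of_map_eq_zero f (by simpa using hfx) hfy

theorem LinearIndependent.vec3_of_map_eq_zero {x y z : V} (hxy : LinearIndependent K ![x, y])
    (f : V →ₗ[K] W) (hfx : f x = 0) (hfy : f y = 0) (hfz : f z ≠ 0) :
    LinearIndependent K ![x, y, z] := by
  simpa using hxy.finSnoc_of_map_eq_zero f (by simp [Fin.forall_fin_two, hfx, hfy]) hfz

theorem Submodule.exists_mem_linearIndependent_pair [FiniteDimensional K V] {p : Submodule K V}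
    (hp : 1 < finrank K p) {x : V} (hx : x ∈ p) (hx0 : x ≠ 0) :
    ∃ y ∈ p, LinearIndependent K ![y, x] := by
  obtain ⟨y, hy⟩ := exists_linearIndependent_pair_of_one_lt_finrank hp
    (x := ⟨x, hx⟩) (by simpa using hx0)
  refine ⟨y, y.2, LinearIndependent.pair_symm_iff.1 ?_⟩
  convert hy.map' p.subtype p.ker_subtype using 1
  ext i
  fin_cases i <;> rfl

theorem LinearMap.finrank_le_finrank_ker_add_finrank_ker [FiniteDimensional K V]
    {f g : V →ₗ[K] V} (h : f ∘ₗ g = 0) :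
    finrank K V ≤ finrank K (ker f) + finrank K (ker g) := by
  have := Submodule.finrank_mono (LinearMap.range_le_ker_iff.2 h)
  have := g.finrank_range_add_finrank_ker
  omega

end

namespace Matrix

variable {K : Type*} [Field K]

section

variable {ι : Type*} [Fintype ι] [DecidableEq ι]

theorem isConj_of_mulVec_eq_sum {A B : Matrix ι ι K} (v : ι → ι → K)
    (hv : LinearIndependent K v) (hAv : ∀ j, A *ᵥ v j = ∑ i, B i j • v i) : IsConj A B := by
  have hP : IsUnit (of v)ᵀ := (isUnit_transpose _).2 (linearIndependent_rows_iff_isUnit.1 hv)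
  have hAP : A * (of v)ᵀ = (of v)ᵀ * B := by
    ext i j
    simpa [mul_apply, mulVec, dotProduct, Finset.sum_apply, mul_comm] using congrFun (hAv j) i
  exact isConj_comm.1 ⟨hP.unit, hAP.symm⟩

theorem isConj_diagonal_of_mulVec_eq_smul {A : Matrix ι ι K} {d : ι → K} (v : ι → ι → K)
    (hv : LinearIndependent K v) (hAv : ∀ i, A *ᵥ v i = d i • v i) : IsConj A (diagonal d) :=
  isConj_of_mulVec_eq_sum v hv fun j => by simp [hAv, diagonal_apply, ite_smul]

theorem exists_mulVec_eq_smul_of_isRoot {A : Matrix ι ι K} {μ : K} (h : A.charpoly.IsRoot μ) :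
    ∃ v, v ≠ 0 ∧ A *ᵥ v = μ • v := by
  rw [← charpoly_toLin', ← Module.End.hasEigenvalue_iff_isRoot_charpoly] at h
  obtain ⟨v, hv, hv0⟩ := h.exists_hasEigenvector
  exact ⟨v, hv0, by simpa using Module.End.mem_eigenspace_iff.1 hv⟩

theorem isConj_diagonal_of_injective {A : Matrix ι ι K} {d : ι → K} (hd : Function.Injective d)
    (hroot : ∀ i, A.charpoly.IsRoot (d i)) : IsConj A (diagonal d) := by
  choose v hv0 hAv using fun i => exists_mulVec_eq_smul_of_isRoot (hroot i)
  refine isConj_diagonal_of_mulVec_eq_smul v ?_ hAv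
  exact Module.End.eigenvectors_linearIndependent' (toLin' A) d hd v fun i =>
    ⟨Module.End.mem_eigenspace_iff.2 (by simpa using hAv i), hv0 i⟩

theorem ker_toLin'_sub_smul_one (A : Matrix ι ι K) (μ : K) :
    LinearMap.ker (toLin' (A - μ • 1)) = Module.End.eigenspace (toLin' A) μ := by
  rw [Module.End.eigenspace_def, map_sub, map_smul, toLin'_one]
  rfl

end

theorem exists_mulVec_ne_zero {m n : Type*} [Fintype n] [DecidableEq n] {A : Matrix m n K}
    (hA : A ≠ 0) : ∃ v, A *ᵥ v ≠ 0 := by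
  by_contra! h
  exact hA (ext fun i j => by simpa using congrFun (h (Pi.single j 1)) i)

variable {A : Matrix (Fin 3) (Fin 3) K}

theorem isConj_of_sq_eq_zero (hA : A ≠ 0) (hA2 : A ^ 2 = 0) :
    IsConj A !![0, 0, 0; 0, 0, 1; 0, 0, 0] := by
  rw [sq] at hA2
  obtain ⟨w, hw⟩ := exists_mulVec_ne_zero hA
  have hker : 1 < finrank K (LinearMap.ker (toLin' A)) := by
    have := LinearMap.finrank_le_finrank_ker_add_finrank_ker (f := toLin' A) (g := toLin' A)
      (by rw [← toLin'_mul, hA2, map_zero])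
    simp only [finrank_fin_fun] at this
    omega
  obtain ⟨y, hy, hyAw⟩ := Submodule.exists_mem_linearIndependent_pair hker
    (x := A *ᵥ w) (by simp [hA2]) hw
  rw [LinearMap.mem_ker, toLin'_apply] at hy
  refine isConj_of_mulVec_eq_sum ![y, A *ᵥ w, w]
    (hyAw.vec3_of_map_eq_zero (toLin' A) (by simpa) (by simp [hA2]) (by simpa)) ?_
  intro j
  fin_cases j <;> simp [Fin.sum_univ_three, hy, hA2]

theorem isConj_of_pow_three_eq_zero (hA2 : A ^ 2 ≠ 0) (hA3 : A ^ 3 = 0) :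
    IsConj A !![0, 1, 0; 0, 0, 1; 0, 0, 0] := by
  rw [sq] at hA2
  rw [pow_three] at hA3
  obtain ⟨w, hw⟩ := exists_mulVec_ne_zero hA2
  have hpair : LinearIndependent K ![(A * A) *ᵥ w, A *ᵥ w] :=
    linearIndependent_vec2_of_map_eq_zero hw (toLin' A) (by simp [hA3]) (by simpa)
  refine isConj_of_mulVec_eq_sum ![(A * A) *ᵥ w, A *ᵥ w, w]
    (hpair.vec3_of_map_eq_zero (toLin' (A * A)) (by simp [hA3]) (by simp [hA3]) (by simpa)) ?_
  intro j
  fin_cases j <;> simp [Fin.sum_univ_three, hA3]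

theorem isConj_diagonal_of_charpoly_eq_sq_mul {a c : K} (hac : a ≠ c)
    (hchar : A.charpoly = (X - C a) ^ 2 * (X - C c)) (hA : (A - a • 1) * (A - c • 1) = 0) :
    IsConj A (diagonal ![a, a, c]) := by
  -- the `a`-eigenspace contains the range of `A - c • 1`, whose kernel has dimension at most the
  -- multiplicity `1` of the root `c`
  have hmult : finrank K (Module.End.eigenspace (toLin' A) c) ≤ 1 := by
    grw [LinearMap.finrank_eigenspace_le]
    rw [charpoly_toLin', hchar, rootMultiplicity_mul (by simp [X_sub_C_ne_zero]),
      rootMultiplicity_X_sub_C_self, rootMultiplicity_eq_zero (by simp [sub_eq_zero, hac.symm])]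
  have hsum := LinearMap.finrank_le_finrank_ker_add_finrank_ker
    (f := toLin' (A - a • 1)) (g := toLin' (A - c • 1)) (by rw [← toLin'_mul, hA, map_zero])
  rw [ker_toLin'_sub_smul_one, ker_toLin'_sub_smul_one, finrank_fin_fun] at hsum
  obtain ⟨va, hva0, hva⟩ := exists_mulVec_eq_smul_of_isRoot (A := A) (μ := a) (by simp [hchar])
  obtain ⟨vc, hvc0, hvc⟩ := exists_mulVec_eq_smul_of_isRoot (A := A) (μ := c) (by simp [hchar])
  obtain ⟨y, hy, hyva⟩ := Submodule.exists_mem_linearIndependent_pair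
    (p := Module.End.eigenspace (toLin' A) a) (by omega)
    (Module.End.mem_eigenspace_iff.2 (by simpa using hva)) hva0
  rw [Module.End.mem_eigenspace_iff, toLin'_apply] at hy
  refine isConj_diagonal_of_mulVec_eq_smul ![y, va, vc]
    (hyva.vec3_of_map_eq_zero (toLin' (A - a • 1)) ?_ ?_ ?_) ?_
  · simp [hy]
  · simp [hva]
  · simpa [hvc, ← sub_smul, sub_eq_zero, hac.symm] using hvc0
  · intro i
    fin_cases i <;> simp [hy, hva, hvc]

theorem isConj_jordan_of_charpoly_eq_sq_mul {a c s : K} (hac : a ≠ c) (hs : s ≠ 0)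
    (hchar : A.charpoly = (X - C a) ^ 2 * (X - C c)) (hA : (A - a • 1) * (A - c • 1) ≠ 0) :
    IsConj A !![a, s, 0; 0, a, 0; 0, 0, c] := by
  set N := A - a • 1
  set M := A - c • 1
  have hNNM : N * N * M = 0 := by
    have := A.aeval_self_charpoly
    rw [hchar] at this
    simpa [sq, N, M, Algebra.algebraMap_eq_smul_one] using this
  obtain ⟨w, hw⟩ := exists_mulVec_ne_zero hA
  obtain ⟨vc, hvc0, hvc⟩ := exists_mulVec_eq_smul_of_isRoot (A := A) (μ := c) (by simp [hchar])
  set u := M *ᵥ w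
  set v := s⁻¹ • (N *ᵥ u)
  have hNu : N *ᵥ u = s • v := by simp [v, hs]
  have hNv : N *ᵥ v = 0 := by simp [v, u, mulVec_smul, ← mul_assoc, hNNM]
  have hpair : LinearIndependent K ![v, u] :=
    linearIndependent_vec2_of_map_eq_zero (by simpa [v, hs, u] using hw) (toLin' N) (by simpa)
      (by simpa [u] using hw)
  have hNvc : N *ᵥ vc = (c - a) • vc := by simp [N, sub_mulVec, smul_mulVec, hvc, sub_smul]
  have hAv : A *ᵥ v = a • v := by simpa [N, sub_mulVec, smul_mulVec, sub_eq_zero] using hNv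
  have hAu : A *ᵥ u = s • v + a • u := by
    rw [← hNu]
    simp [N, sub_mulVec, smul_mulVec]
  refine isConj_of_mulVec_eq_sum ![v, u, vc]
    (hpair.vec3_of_map_eq_zero (toLin' (N * N)) ?_ ?_ ?_) ?_
  · rw [toLin'_apply, ← mulVec_mulVec, hNv, mulVec_zero]
  · rw [toLin'_apply, mulVec_mulVec, hNNM, zero_mulVec]
  · rw [toLin'_apply, ← mulVec_mulVec, hNvc, mulVec_smul, hNvc, smul_smul]
    exact smul_ne_zero (mul_ne_zero (sub_ne_zero.2 hac.symm) (sub_ne_zero.2 hac.symm)) hvc0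
  · intro j
    fin_cases j <;> simp [Fin.sum_univ_three, hAv, hAu, hvc]

theorem isConj_diagonal_vec3_of_isRoot {a b c : K} (ha : A.charpoly.IsRoot a)
    (hb : A.charpoly.IsRoot b) (hc : A.charpoly.IsRoot c) (hab : a ≠ b) (hac : a ≠ c)
    (hbc : b ≠ c) : IsConj A (diagonal ![a, b, c]) := by
  refine isConj_diagonal_of_injective ?_ fun i => by fin_cases i <;> assumption
  intro i j hij
  fin_cases i <;> fin_cases j <;> simp_all [eq_comm]

theorem exists_charpoly_eq_prod_X_sub_C [IsAlgClosed K] (A : Matrix (Fin 3) (Fin 3) K) :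
    ∃ a b c, A.charpoly = (X - C a) * (X - C b) * (X - C c) ∧ A.trace = a + b + c := by
  have hsplit : A.charpoly.Splits := IsAlgClosed.splits _
  have hcard : A.charpoly.roots.card = 3 := by
    rw [splits_iff_card_roots.1 hsplit, charpoly_natDegree_eq_dim, Fintype.card_fin]
  obtain ⟨a, b, c, habc⟩ := Multiset.card_eq_three.1 hcard
  refine ⟨a, b, c, ?_, ?_⟩
  · rw [hsplit.eq_prod_roots_of_monic A.charpoly_monic, habc]
    simp [mul_assoc]
  · rw [trace_eq_sum_roots_charpoly_of_splits hsplit, habc]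
    simp [add_assoc]

end Matrix

/-- A nonzero multiple of one of `Ξ₁`, `Ξ_{2,1}`, `Ξ_{2,3}`, `Ξ_{3,2}`, `Ξ_{3,3}(a, b)`. -/
def IsSl3NormalForm (B : Matrix (Fin 3) (Fin 3) ℂ) : Prop :=
  ∃ c : ℂ, c ≠ 0 ∧
    (B = c • !![(0:ℂ),1,0; 0,0,1; 0,0,0] ∨
     B = c • !![(0:ℂ),0,0; 0,0,1; 0,0,0] ∨
     B = c • !![(1:ℂ),1,0; 0,1,0; 0,0,-2] ∨
     B = c • !![(1:ℂ),0,0; 0,-1,0; 0,0,0] ∨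
     ∃ a b : ℂ, a ≠ 0 ∧ b ≠ 0 ∧ a + b ≠ 0 ∧ B = c • !![a,0,0; 0,b,0; 0,0,-(a+b)])

theorem isSl3NormalForm_diagonal_neg {a : ℂ} (ha : a ≠ 0) :
    IsSl3NormalForm (diagonal ![a, -a, 0]) :=
  ⟨a, ha, Or.inr <| Or.inr <| Or.inr <| Or.inl <| by simp [diagonal_vec3]⟩

theorem isSl3NormalForm_diagonal {a b : ℂ} (ha : a ≠ 0) (hb : b ≠ 0) (hab : a + b ≠ 0) :
    IsSl3NormalForm (diagonal ![a, b, -(a + b)]) :=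
  ⟨1, one_ne_zero,
    Or.inr <| Or.inr <| Or.inr <| Or.inr ⟨a, b, ha, hb, hab, by simp [diagonal_vec3]⟩⟩

theorem isSl3NormalForm_jordan {a : ℂ} (ha : a ≠ 0) :
    IsSl3NormalForm !![a, a, 0; 0, a, 0; 0, 0, -(a + a)] :=
  ⟨a, ha, Or.inr <| Or.inr <| Or.inl <| by ext i j; fin_cases i <;> fin_cases j <;> simp; ring⟩

theorem exists_isConj_isSl3NormalForm_of_charpoly_eq_X_pow {A : Matrix (Fin 3) (Fin 3) ℂ}
    (hA : A ≠ 0) (hchar : A.charpoly = X ^ 3) : ∃ B, IsConj A B ∧ IsSl3NormalForm B := by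
  have hA3 : A ^ 3 = 0 := by simpa [hchar] using A.aeval_self_charpoly
  by_cases hA2 : A ^ 2 = 0
  · exact ⟨_, isConj_of_sq_eq_zero hA hA2, 1, one_ne_zero,
      Or.inr <| Or.inl (one_smul _ _).symm⟩
  · exact ⟨_, isConj_of_pow_three_eq_zero hA2 hA3, 1, one_ne_zero, Or.inl (one_smul _ _).symm⟩

theorem exists_isConj_isSl3NormalForm_of_charpoly_eq_sq_mul {A : Matrix (Fin 3) (Fin 3) ℂ}
    {a c : ℂ} (hac : a ≠ c) (hsum : 2 * a + c = 0)
    (hchar : A.charpoly = (X - C a) ^ 2 * (X - C c)) : ∃ B, IsConj A B ∧ IsSl3NormalForm B := by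
  obtain rfl : c = -(a + a) := by linear_combination hsum
  have ha : a ≠ 0 := by rintro rfl; simp at hac
  by_cases hA : (A - a • 1) * (A - (-(a + a)) • 1) = 0
  · exact ⟨_, isConj_diagonal_of_charpoly_eq_sq_mul hac hchar hA,
      isSl3NormalForm_diagonal ha ha (by simpa using ha)⟩
  · exact ⟨_, isConj_jordan_of_charpoly_eq_sq_mul hac ha hchar hA, isSl3NormalForm_jordan ha⟩

theorem exists_isConj_isSl3NormalForm_of_injective {A : Matrix (Fin 3) (Fin 3) ℂ}
    {a b c : ℂ} (hab : a ≠ b) (hac : a ≠ c) (hbc : b ≠ c) (hsum : a + b + c = 0)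
    (hchar : A.charpoly = (X - C a) * (X - C b) * (X - C c)) :
    ∃ B, IsConj A B ∧ IsSl3NormalForm B := by
  have ha : A.charpoly.IsRoot a := by simp [hchar]
  have hb : A.charpoly.IsRoot b := by simp [hchar]
  have hc : A.charpoly.IsRoot c := by simp [hchar]
  rcases eq_or_ne c 0 with rfl | hc0
  · obtain rfl : b = -a := by linear_combination hsum
    exact ⟨_, isConj_diagonal_vec3_of_isRoot ha hb hc hab hac hbc,
      isSl3NormalForm_diagonal_neg hac⟩
  rcases eq_or_ne b 0 with rfl | hb0
  · obtain rfl : c = -a := by linear_combination hsum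
    exact ⟨_, isConj_diagonal_vec3_of_isRoot ha hc hb hac hab hbc.symm,
      isSl3NormalForm_diagonal_neg hab⟩
  rcases eq_or_ne a 0 with rfl | ha0
  · obtain rfl : c = -b := by linear_combination hsum
    exact ⟨_, isConj_diagonal_vec3_of_isRoot hb hc ha hbc hab.symm hac.symm,
      isSl3NormalForm_diagonal_neg hab.symm⟩
  obtain rfl : c = -(a + b) := by linear_combination hsum
  exact ⟨_, isConj_diagonal_vec3_of_isRoot ha hb hc hab hac hbc,
    isSl3NormalForm_diagonal ha0 hb0 (neg_ne_zero.1 hc0)⟩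

theorem exists_isConj_isSl3NormalForm {A : Matrix (Fin 3) (Fin 3) ℂ} (hA : A ≠ 0)
    (htr : A.trace = 0) : ∃ B, IsConj A B ∧ IsSl3NormalForm B := by
  obtain ⟨a, b, c, hchar, htrace⟩ := exists_charpoly_eq_prod_X_sub_C A
  have hsum : a + b + c = 0 := htrace ▸ htr
  rcases eq_or_ne a b with rfl | hab <;> rcases eq_or_ne a c with rfl | hac
  · obtain rfl : a = 0 := by linear_combination hsum / 3
    exact exists_isConj_isSl3NormalForm_of_charpoly_eq_X_pow hA (by rw [hchar]; simp; ring)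
  · exact exists_isConj_isSl3NormalForm_of_charpoly_eq_sq_mul hac (by linear_combination hsum)
      (by rw [hchar]; ring)
  · exact exists_isConj_isSl3NormalForm_of_charpoly_eq_sq_mul hab (by linear_combination hsum)
      (by rw [hchar]; ring)
  · rcases eq_or_ne b c with rfl | hbc
    · exact exists_isConj_isSl3NormalForm_of_charpoly_eq_sq_mul hab.symm
        (by linear_combination hsum) (by rw [hchar]; ring)
    · exact exists_isConj_isSl3NormalForm_of_injective hab hac hbc hsum hchar

/-- Jordan classification of 1-dimensional subalgebras of `sl(3, ℂ)`: every
nonzero traceless `3×3` complex matrix is conjugate, up to a nonzero scalar,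
to one of the normal forms `Ξ₁`, `Ξ_{2,1}`, `Ξ_{2,3}`, `Ξ_{3,2}`, `Ξ_{3,3}`. -/
theorem one_dim_subalgebras_of_sl3 (A : Matrix (Fin 3) (Fin 3) ℂ)
    (hA : A ≠ 0) (htr : A.trace = 0) :
    ∃ g : GL (Fin 3) ℂ, ∃ c : ℂ, c ≠ 0 ∧
      ((g : Matrix (Fin 3) (Fin 3) ℂ) * A * (↑g⁻¹ : Matrix (Fin 3) (Fin 3) ℂ) =
          c • !![(0:ℂ),1,0; 0,0,1; 0,0,0] ∨
       (g : Matrix (Fin 3) (Fin 3) ℂ) * A * (↑g⁻¹ : Matrix (Fin 3) (Fin 3) ℂ) =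
          c • !![(0:ℂ),0,0; 0,0,1; 0,0,0] ∨
       (g : Matrix (Fin 3) (Fin 3) ℂ) * A * (↑g⁻¹ : Matrix (Fin 3) (Fin 3) ℂ) =
          c • !![(1:ℂ),1,0; 0,1,0; 0,0,-2] ∨
       (g : Matrix (Fin 3) (Fin 3) ℂ) * A * (↑g⁻¹ : Matrix (Fin 3) (Fin 3) ℂ) =
          c • !![(1:ℂ),0,0; 0,-1,0; 0,0,0] ∨
       ∃ a b : ℂ, a ≠ 0 ∧ b ≠ 0 ∧ a + b ≠ 0 ∧
         (g : Matrix (Fin 3) (Fin 3) ℂ) * A * (↑g⁻¹ : Matrix (Fin 3) (Fin 3) ℂ) =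
            c • !![a,0,0; 0,b,0; 0,0,-(a+b)]) := by
  obtain ⟨B, ⟨g, hg⟩, hB⟩ := exists_isConj_isSl3NormalForm hA htr
  refine ⟨g, ?_⟩
  rw [(Units.mul_inv_eq_iff_eq_mul g).2 hg.eq]
  exact hB
end
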